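/- Let U ⊂ C((-∞,0],ℝ^n) be open, f : U → ℝ^n continuous, T > 0, and dom_T = {ξ ∈ C((-∞,T],ℝ^n) : ξ_t ∈ U for all t ∈ [0,T]}. Then the substitution operator F_T : dom_T → C([0,T],ℝ^n), F_T(ξ)(t) = f(ξ_t), is well-defined and continuous, where C([0,T],ℝ^n) carries the sup norm. -/

import Mathlib

open Set

/-! Currying `(ξ, t) ↦ f(ξ_t)` gives `F_T`: this map is continuous on `dom_T × [0,T]` because the
segment map `(ξ, t) ↦ ξ_t` is jointly continuous (evaluation on `C((-∞,T],ℝⁿ)` is continuous,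
`(-∞,T]` being locally compact), and currying a continuous map lands continuously in the
compact-open topology, which on `C([0,T],ℝⁿ)` is the sup-norm topology. -/

/-- The segment `ξ_t ∈ C((-∞,0],ℝⁿ)` of `ξ ∈ C((-∞,T],ℝⁿ)`, for `t ≤ T`. -/
def segT {E : Type*} [TopologicalSpace E] {T : ℝ} (ξ : C(Set.Iic T, E))
    (t : ℝ) (ht : t ≤ T) : C(Set.Iic (0:ℝ), E) :=
  ξ.comp ⟨fun s => ⟨t + s.1, by
      have h := s.2
      simp only [Set.mem_Iic] at h ⊢
      linarith⟩, by
    apply Continuous.subtype_mk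
    fun_prop⟩

theorem ContinuousOn.exists_curry {X K Z : Type*} [TopologicalSpace X] [TopologicalSpace K]
    [TopologicalSpace Z] [Nonempty Z] {D : Set X} {g : X × K → Z}
    (hg : ContinuousOn g (D ×ˢ univ)) :
    ∃ F : X → C(K, Z), (∀ x ∈ D, ∀ k, F x k = g (x, k)) ∧ ContinuousOn F D := by
  classical
  let G : C(D × K, Z) :=
    ⟨fun p => g (p.1, p.2), hg.comp_continuous (by fun_prop) fun p => ⟨p.1.2, mem_univ _⟩⟩
  refine ⟨fun x => if hx : x ∈ D then G.curry ⟨x, hx⟩ else .const K (Classical.arbitrary Z),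
    fun x hx k => by simp [hx, G], ?_⟩
  rw [continuousOn_iff_continuous_domRestrict]
  convert G.curry.continuous using 1
  ext x : 1
  simp [x.2]

theorem continuous_segT {E : Type*} [TopologicalSpace E] {T : ℝ} :
    Continuous fun p : C(Iic T, E) × Iic T => segT p.1 p.2 p.2.2 := by
  have : LocallyCompactSpace (Iic T) := isClosed_Iic.locallyCompactSpace
  refine ContinuousMap.continuous_of_continuous_uncurry _ ?_
  have hshift : Continuous fun q : (C(Iic T, E) × Iic T) × Iic (0:ℝ) =>
      (⟨q.1.2 + q.2, mem_Iic.2 (add_le_of_le_of_nonpos q.1.2.2 q.2.2)⟩ : Iic T) :=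
    Continuous.subtype_mk (by fun_prop) _
  exact continuous_eval.comp ((continuous_fst.comp continuous_fst).prodMk hshift)

theorem substitution_operator_FT_continuous_general (n : ℕ)
    (U : Set C(Set.Iic (0:ℝ), Fin n → ℝ))
    (f : C(Set.Iic (0:ℝ), Fin n → ℝ) → (Fin n → ℝ)) (hf : ContinuousOn f U)
    (T : ℝ) :
    ∃ F : C(Set.Iic T, Fin n → ℝ) → C(Set.Icc (0:ℝ) T, Fin n → ℝ),
      (∀ ξ ∈ {ξ : C(Set.Iic T, Fin n → ℝ) |
          ∀ (t : ℝ) (ht0 : 0 ≤ t) (htT : t ≤ T), segT ξ t htT ∈ U},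
        ∀ t : Set.Icc (0:ℝ) T, F ξ t = f (segT ξ t.1 t.2.2)) ∧
      ContinuousOn F {ξ : C(Set.Iic T, Fin n → ℝ) |
        ∀ (t : ℝ) (ht0 : 0 ≤ t) (htT : t ≤ T), segT ξ t htT ∈ U} := by
  have hseg : Continuous fun p : C(Iic T, Fin n → ℝ) × Icc (0:ℝ) T => segT p.1 p.2.1 p.2.2.2 :=
    continuous_segT.comp (continuous_fst.prodMk (continuous_inclusion Icc_subset_Iic_self).snd')
  refine ContinuousOn.exists_curry (hf.comp hseg.continuousOn ?_)
  rintro ⟨ξ, t⟩ ⟨hξ, -⟩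
  exact hξ t.1 t.2.1 t.2.2

/-- For `U ⊆ C((-∞,0],ℝⁿ)` open, `f : U → ℝⁿ` continuous, `T > 0`
and `dom_T = {ξ : ξ_t ∈ U for all t ∈ [0,T]}`, the substitution operator
`F_T : dom_T → C([0,T],ℝⁿ)`, `F_T(ξ)(t) = f(ξ_t)`, is well defined and
continuous, where `C([0,T],ℝⁿ)` carries the sup norm. -/
theorem substitution_operator_FT_continuous (n : ℕ)
    (U : Set C(Set.Iic (0:ℝ), Fin n → ℝ)) (hU : IsOpen U)
    (f : C(Set.Iic (0:ℝ), Fin n → ℝ) → (Fin n → ℝ)) (hf : ContinuousOn f U)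
    (T : ℝ) (hT : 0 < T) :
    ∃ F : C(Set.Iic T, Fin n → ℝ) → C(Set.Icc (0:ℝ) T, Fin n → ℝ),
      (∀ ξ ∈ {ξ : C(Set.Iic T, Fin n → ℝ) |
          ∀ (t : ℝ) (ht0 : 0 ≤ t) (htT : t ≤ T), segT ξ t htT ∈ U},
        ∀ t : Set.Icc (0:ℝ) T, F ξ t = f (segT ξ t.1 t.2.2)) ∧
      ContinuousOn F {ξ : C(Set.Iic T, Fin n → ℝ) |
        ∀ (t : ℝ) (ht0 : 0 ≤ t) (htT : t ≤ T), segT ξ t htT ∈ U} :=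
  substitution_operator_FT_continuous_general n U f hf T
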